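/- Let (G,p) be a framework in ℝ^d, and suppose σ is a graph automorphism of G and T an isometry of ℝ^d with σ(p) = Tp (a spatial symmetry). Write T = (translation) ∘ S with S a linear isometry. Then R(G,p) = σ_e⁻¹ R(G,p) σ_v S̃, where σ_v, σ_e are the induced permutation operators and S̃ = S ⊕ ⋯ ⊕ S. -/
import Mathlib


open scoped RealInnerProductSpace

/-- The rigidity matrix of the framework `(G, p)` in `ℝ^d`. -/
noncomputable def rigidityMap (d : ℕ) {V E : Type*} (ends : E → V × V)
    (p : V → EuclideanSpace ℝ (Fin d)) :
    (V → EuclideanSpace ℝ (Fin d)) →ₗ[ℝ] (E → ℝ) where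
  toFun u := fun e =>
    ⟪p (ends e).1 - p (ends e).2, u (ends e).1 - u (ends e).2⟫
  map_add' u w := by
    funext e
    simp only [Pi.add_apply, add_sub_add_comm, inner_add_right]
  map_smul' c u := by
    funext e
    simp only [Pi.smul_apply, RingHom.id_apply, ← smul_sub, inner_smul_right,
      smul_eq_mul]

/-- if `σ` is a graph automorphism (acting on edges by `τ`) and
`T = (translation by t) ∘ S` is an isometry of `ℝ^d` with `σ(p) = Tp`, then
`R(G, p) = σₑ⁻¹ R(G, p) σᵥ S̃`, stated entrywise: the row of `R(G,p)` at `e`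
applied to `u` equals the row of `R(G,p)` at `τ e` applied to `σᵥ (S̃ u)`. -/
theorem rigidityMap_spatial_symmetry
    {d : ℕ} {V E : Type*} (ends : E → V × V)
    (p : V → EuclideanSpace ℝ (Fin d))
    (σ : Equiv.Perm V) (τ : Equiv.Perm E)
    (hcompat : ∀ e : E,
      ends (τ e) = (σ (ends e).1, σ (ends e).2) ∨
      ends (τ e) = (σ (ends e).2, σ (ends e).1))
    (S : EuclideanSpace ℝ (Fin d) ≃ₗᵢ[ℝ] EuclideanSpace ℝ (Fin d))
    (t : EuclideanSpace ℝ (Fin d))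
    (hsym : ∀ i : V, p (σ i) = S (p i) + t) :
    ∀ (u : V → EuclideanSpace ℝ (Fin d)) (e : E),
      rigidityMap d ends p u e
        = rigidityMap d ends p (fun i => S (u (σ.symm i))) (τ e) := by
  intro u e
  simp only [rigidityMap, LinearMap.coe_mk, AddHom.coe_mk]
  rcases hcompat e with h | h <;> rw [h] <;>
    simp only [hsym, Equiv.symm_apply_apply, add_sub_add_right_eq_sub,
      ← map_sub, LinearIsometryEquiv.inner_map_map]
  rw [← inner_neg_neg, neg_sub, neg_sub]
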